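/- Let N ≥ 2, let ω_1,…,ω_N > 0 with W = diag(ω_1,…,ω_N), and let M be an invertible N×N real matrix such that each row of (W^{1/2} M)^{-1} has Euclidean norm at most √2. Let B be the block diagonal matrix with diagonal blocks B_1,…,B_N ∈ ℝ^{n×m}, and let U = (U_1,…,U_N) with U_i ∈ ℝ^m. Then each block component of (M^{-1} ⊗ I_n) B U has Euclidean norm at most √2 · (max_{1≤i≤N} ‖B_i‖₂) · ‖U‖_ω, where ‖B_i‖₂ is the spectral norm and ‖U‖_ω² = Σ_{i=1}^{N} ω_i |U_i|² with |·| the Euclidean norm. -/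

import Mathlib

open Matrix Kronecker

noncomputable section

/-- Euclidean norm of a finite real vector. -/
def enorm' {k : ℕ} (v : Fin k → ℝ) : ℝ := Real.sqrt (∑ i, (v i) ^ 2)

/-- Spectral norm (ℓ²-operator norm) of a rectangular real matrix. -/
def specNorm {a b : ℕ} (B : Matrix (Fin a) (Fin b) ℝ) : ℝ :=
  ‖LinearMap.toContinuousLinearMap (Matrix.toEuclideanLin B)‖

/-- The block diagonal matrix with diagonal blocks `B 0, …, B (N-1)`
(block index listed first). -/
def blockDiag (N n m : ℕ) (B : Fin N → Matrix (Fin n) (Fin m) ℝ) :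
    Matrix (Fin N × Fin n) (Fin N × Fin m) ℝ :=
  fun p q => if p.1 = q.1 then B p.1 p.2 q.2 else 0

/-! Writing `W^{1/2} = diag(√ω)` and `A = (W^{1/2} M)⁻¹`, we have `M⁻¹ = A W^{1/2}`, so the `i`-th
block of `(M⁻¹ ⊗ I_n) B U` is `∑ⱼ Aᵢⱼ √ωⱼ Bⱼ Uⱼ`. The triangle inequality and `|Bⱼ Uⱼ| ≤ ‖Bⱼ‖₂ |Uⱼ|`
bound its norm by `(maxⱼ ‖Bⱼ‖₂) ∑ⱼ |Aᵢⱼ| √ωⱼ |Uⱼ|`, and Cauchy–Schwarz bounds the last sum by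
`|Aᵢ·| ‖U‖_ω ≤ √2 ‖U‖_ω`. -/

lemma enorm'_eq_norm_toLp {k : ℕ} (v : Fin k → ℝ) : enorm' v = ‖WithLp.toLp 2 v‖ := by
  simp [enorm', EuclideanSpace.norm_eq, sq_abs]

lemma enorm'_nonneg {k : ℕ} (v : Fin k → ℝ) : 0 ≤ enorm' v := Real.sqrt_nonneg _

lemma enorm'_sq {k : ℕ} (v : Fin k → ℝ) : enorm' v ^ 2 = ∑ i, v i ^ 2 :=
  Real.sq_sqrt (Finset.sum_nonneg fun i _ => sq_nonneg (v i))

lemma enorm'_sum_smul_le {ι : Type*} [Fintype ι] {k : ℕ} (c : ι → ℝ) (v : ι → Fin k → ℝ) :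
    enorm' (∑ j, c j • v j) ≤ ∑ j, |c j| * enorm' (v j) := by
  simp only [enorm'_eq_norm_toLp, WithLp.toLp_sum, WithLp.toLp_smul]
  refine (norm_sum_le _ _).trans_eq (Finset.sum_congr rfl fun j _ => ?_)
  rw [norm_smul, Real.norm_eq_abs]

lemma specNorm_nonneg {a b : ℕ} (B : Matrix (Fin a) (Fin b) ℝ) : 0 ≤ specNorm B := norm_nonneg _

lemma enorm'_mulVec_le {a b : ℕ} (B : Matrix (Fin a) (Fin b) ℝ) (u : Fin b → ℝ) :
    enorm' (B *ᵥ u) ≤ specNorm B * enorm' u := by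
  simpa [enorm'_eq_norm_toLp, specNorm] using
    (LinearMap.toContinuousLinearMap (Matrix.toEuclideanLin B)).le_opNorm (WithLp.toLp 2 u)

lemma sum_abs_mul_sqrt_mul_enorm'_le {N m : ℕ} (a ω : Fin N → ℝ) (hω : ∀ j, 0 ≤ ω j)
    (U : Fin N → Fin m → ℝ) :
    ∑ j, |a j| * (Real.sqrt (ω j) * enorm' (U j)) ≤
      enorm' a * Real.sqrt (∑ j, ω j * ∑ l, U j l ^ 2) := by
  have hweights : ∀ j, (Real.sqrt (ω j) * enorm' (U j)) ^ 2 = ω j * ∑ l, U j l ^ 2 := fun j => by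
    rw [mul_pow, Real.sq_sqrt (hω j), enorm'_sq]
  refine (Real.sum_mul_le_sqrt_mul_sqrt Finset.univ (fun j => |a j|)
    (fun j => Real.sqrt (ω j) * enorm' (U j))).trans_eq ?_
  simp only [hweights, sq_abs]
  rfl

lemma kroneckerMap_one_mulVec_apply {ι κ : Type*} [Fintype ι] [Fintype κ] [DecidableEq κ]
    (A : Matrix ι ι ℝ) (x : ι × κ → ℝ) (i : ι) (k : κ) :
    ((A ⊗ₖ (1 : Matrix κ κ ℝ)) *ᵥ x) (i, k) = ∑ j, A i j * x (j, k) := by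
  simp [mulVec, dotProduct, Fintype.sum_prod_type, one_apply]

lemma blockDiag_mulVec_apply {N n m : ℕ} (B : Fin N → Matrix (Fin n) (Fin m) ℝ)
    (U : Fin N → Fin m → ℝ) (j : Fin N) (k : Fin n) :
    (_root_.blockDiag N n m B *ᵥ fun q => U q.1 q.2) (j, k) = (B j *ᵥ U j) k := by
  simp [_root_.blockDiag, mulVec, dotProduct, Fintype.sum_prod_type]

lemma inv_eq_inv_diagonal_mul_mul_diagonal {ι K : Type*} [Fintype ι] [DecidableEq ι] [Field K]
    (d : ι → K) (hd : ∀ j, d j ≠ 0) (M : Matrix ι ι K) :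
    M⁻¹ = (diagonal d * M)⁻¹ * diagonal d := by
  have hdet : IsUnit (diagonal d).det := by
    rw [det_diagonal]
    exact (Finset.prod_ne_zero_iff.2 fun j _ => hd j).isUnit
  rw [Matrix.mul_inv_rev, Matrix.mul_assoc, nonsing_inv_mul _ hdet, Matrix.mul_one]

theorem kronecker_block_bound
    (N n m : ℕ) (ω : Fin N → ℝ) (hω : ∀ i, 0 < ω i)
    (M : Matrix (Fin N) (Fin N) ℝ)
    (hrow : ∀ i : Fin N,
      enorm' (fun j => (Matrix.diagonal (fun k => Real.sqrt (ω k)) * M)⁻¹ i j) ≤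
        Real.sqrt 2)
    (B : Fin N → Matrix (Fin n) (Fin m) ℝ)
    (U : Fin N → Fin m → ℝ) :
    ∀ i : Fin N,
      enorm' (fun k : Fin n =>
        ((M⁻¹ ⊗ₖ (1 : Matrix (Fin n) (Fin n) ℝ)).mulVec
          ((blockDiag N n m B).mulVec (fun q => U q.1 q.2))) (i, k)) ≤
      Real.sqrt 2 * (⨆ j, specNorm (B j)) *
        Real.sqrt (∑ j, ω j * ∑ l, (U j l) ^ 2) := by
  intro i
  set A := (diagonal (fun k => Real.sqrt (ω k)) * M)⁻¹
  set S := ⨆ j, specNorm (B j)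
  have hS : ∀ j, specNorm (B j) ≤ S := le_ciSup (Finite.bddAbove_range _)
  have hblock : (fun k => ((M⁻¹ ⊗ₖ (1 : Matrix (Fin n) (Fin n) ℝ)) *ᵥ
      (_root_.blockDiag N n m B *ᵥ fun q => U q.1 q.2)) (i, k)) =
      ∑ j, (A i j * Real.sqrt (ω j)) • (B j *ᵥ U j) := by
    funext k
    rw [inv_eq_inv_diagonal_mul_mul_diagonal _ (fun j => (Real.sqrt_pos.2 (hω j)).ne') M]
    simp only [kroneckerMap_one_mulVec_apply, blockDiag_mulVec_apply, mul_diagonal,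
      Finset.sum_apply, Pi.smul_apply, smul_eq_mul, A]
  rw [hblock]
  calc enorm' (∑ j, (A i j * Real.sqrt (ω j)) • (B j *ᵥ U j))
      ≤ ∑ j, |A i j * Real.sqrt (ω j)| * enorm' (B j *ᵥ U j) := enorm'_sum_smul_le _ _
    _ ≤ ∑ j, |A i j| * Real.sqrt (ω j) * (S * enorm' (U j)) := by
      simp only [abs_mul, abs_of_nonneg (Real.sqrt_nonneg _)]
      gcongr with j
      exact (enorm'_mulVec_le _ _).trans (by gcongr; exacts [enorm'_nonneg _, hS j])
    _ = S * ∑ j, |A i j| * (Real.sqrt (ω j) * enorm' (U j)) := by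
      rw [Finset.mul_sum]; congr! 1 with j; ring
    _ ≤ S * (Real.sqrt 2 * Real.sqrt (∑ j, ω j * ∑ l, U j l ^ 2)) := by
      gcongr
      · exact (specNorm_nonneg _).trans (hS i)
      · exact (sum_abs_mul_sqrt_mul_enorm'_le _ _ (fun j => (hω j).le) U).trans
          (by gcongr; exact hrow i)
    _ = Real.sqrt 2 * S * Real.sqrt (∑ j, ω j * ∑ l, U j l ^ 2) := by ring
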